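/- (Bound for Dawson's integral.) For every x > 0, Dawson's function W(x) := e^{−x²}·∫₀ˣ e^{z²} dz satisfies W(x) ≤ (1 − e^{−x²})/x; in particular W(x) < 1/x. -/

import Mathlib

open Real MeasureTheory

/-- Dawson's integral `W(x) = e^{-x²} ∫₀ˣ e^{z²} dz`. -/
noncomputable def dawson (x : ℝ) : ℝ :=
  Real.exp (-x ^ 2) * ∫ z in (0 : ℝ)..x, Real.exp (z ^ 2)

theorem dawson_bound (x : ℝ) (hx : 0 < x) :
    dawson x ≤ (1 - Real.exp (-x ^ 2)) / x ∧ dawson x < 1 / x := by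
  have hxy : ∫ z in (0:ℝ)..x, Real.exp (x * z)
      = (Real.exp (x ^ 2) - 1) / x := by
    have := intervalIntegral.integral_comp_mul_left (a := 0) (b := x) (fun u => Real.exp u) hx.ne'
    simp only [mul_zero] at this
    rw [this, integral_exp]
    field_simp
    rw [Real.exp_zero]
    linear_combination (Real.exp (x ^ 2) - 1) * mul_inv_cancel₀ hx.ne'
  have hmono : (∫ z in (0:ℝ)..x, Real.exp (z ^ 2))
      ≤ ∫ z in (0:ℝ)..x, Real.exp (x * z) := by
    apply intervalIntegral.integral_mono_on hx.le
    · exact (Real.continuous_exp.comp (continuous_pow 2)).intervalIntegrable 0 x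
    · exact (Real.continuous_exp.comp (continuous_const.mul continuous_id)).intervalIntegrable 0 x
    · intro z hz
      apply Real.exp_le_exp.2
      have := hz.1; have := hz.2
      nlinarith
  have hle : dawson x ≤ (1 - Real.exp (-x ^ 2)) / x := by
    unfold dawson
    have h1 : Real.exp (-x ^ 2) * ((Real.exp (x ^ 2) - 1) / x)
        = (1 - Real.exp (-x ^ 2)) / x := by
      rw [Real.exp_neg]
      field_simp
    calc Real.exp (-x ^ 2) * ∫ z in (0:ℝ)..x, Real.exp (z ^ 2)
        ≤ Real.exp (-x ^ 2) * ((Real.exp (x ^ 2) - 1) / x) := by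
          apply mul_le_mul_of_nonneg_left _ (Real.exp_pos _).le
          rw [← hxy]; exact hmono
      _ = (1 - Real.exp (-x ^ 2)) / x := h1
  refine ⟨hle, lt_of_le_of_lt hle ?_⟩
  gcongr
  linarith [Real.exp_pos (-x ^ 2)]
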